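/- arXiv:math/0703615 — 4 statements merged into one kernel-verified Lean document; each statement's English description precedes it below -/
import Mathlib

section
/- If φ is a twice-differentiable function on (0,1) satisfying u²(1-u)φ''(u) + 2u φ'(u) - 2(1-u)φ(u) = 0 for all u ∈ (0,1), then there exist constants C₁, C₂ such that φ(u) = C₁·u(2-u) + C₂·u⁻²(1-2u) for all u ∈ (0,1). -/
open Set

private lemma const_on_aux (A : ℝ → ℝ) (h : ∀ u ∈ Ioo (0:ℝ) 1, HasDerivAt A 0 u)
    {x y : ℝ} (hx : x ∈ Ioo (0:ℝ) 1) (hy : y ∈ Ioo (0:ℝ) 1) : A x = A y := by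
  apply (convex_Ioo (0:ℝ) 1).is_const_of_fderivWithin_eq_zero
    (fun u hu => (h u hu).differentiableAt.differentiableWithinAt) ?_ hx hy
  intro u hu
  rw [fderivWithin_eq_fderiv (isOpen_Ioo.uniqueDiffWithinAt hu) (h u hu).differentiableAt,
    (h u hu).hasFDerivAt.fderiv]
  ext
  simp

/-- Any twice-differentiable solution on `(0,1)` of
`u²(1-u)φ'' + 2u φ' - 2(1-u)φ = 0` is a linear combination of
`u(2-u)` and `u⁻²(1-2u)`. -/
theorem stmt_1 (φ φ' φ'' : ℝ → ℝ)
    (hφ' : ∀ u ∈ Ioo (0:ℝ) 1, HasDerivAt φ (φ' u) u)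
    (hφ'' : ∀ u ∈ Ioo (0:ℝ) 1, HasDerivAt φ' (φ'' u) u)
    (hode : ∀ u ∈ Ioo (0:ℝ) 1,
      u ^ 2 * (1 - u) * φ'' u + 2 * u * φ' u - 2 * (1 - u) * φ u = 0) :
    ∃ C₁ C₂ : ℝ, ∀ u ∈ Ioo (0:ℝ) 1,
      φ u = C₁ * (u * (2 - u)) + C₂ * (u⁻¹ ^ 2 * (1 - 2 * u)) := by
  set f : ℝ → ℝ := fun u => u * (2 - u) with hf_def
  set F' : ℝ → ℝ := fun u => 2 - 2 * u with hF'_def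
  set g : ℝ → ℝ := fun u => (1 - 2 * u) / u ^ 2 with hg_def
  set G' : ℝ → ℝ := fun u => (2 * u - 2) / u ^ 3 with hG'_def
  set G'' : ℝ → ℝ := fun u => (6 - 4 * u) / u ^ 4 with hG''_def
  set N₁ : ℝ → ℝ := fun u => φ u * G' u - φ' u * g u with hN₁_def
  set N₂ : ℝ → ℝ := fun u => f u * φ' u - F' u * φ u with hN₂_def
  set W : ℝ → ℝ := fun u => f u * G' u - F' u * g u with hW_def
  -- basic facts on Ioo
  have hu0 : ∀ u ∈ Ioo (0:ℝ) 1, u ≠ 0 := fun u hu => ne_of_gt hu.1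
  have hu1 : ∀ u ∈ Ioo (0:ℝ) 1, (1:ℝ) - u ≠ 0 := fun u hu => by
    have := hu.2; intro h; linarith [sub_eq_zero.mp h]
  -- derivatives of the explicit solutions
  have hf : ∀ u ∈ Ioo (0:ℝ) 1, HasDerivAt f (F' u) u := by
    intro u hu
    have h := (hasDerivAt_id u).mul ((hasDerivAt_const u (2:ℝ)).sub (hasDerivAt_id u))
    refine h.congr_deriv (Eq.symm ?_)
    simp [hF'_def]; ring
  have hF' : ∀ u ∈ Ioo (0:ℝ) 1, HasDerivAt F' (-2 : ℝ) u := by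
    intro u hu
    have h := (hasDerivAt_const u (2:ℝ)).sub ((hasDerivAt_const u (2:ℝ)).mul (hasDerivAt_id u))
    refine h.congr_deriv (Eq.symm ?_)
    ring
  have hg : ∀ u ∈ Ioo (0:ℝ) 1, HasDerivAt g (G' u) u := by
    intro u hu
    have hnum : HasDerivAt (fun u : ℝ => 1 - 2 * u) (-2 : ℝ) u := by
      have h := (hasDerivAt_const u (1:ℝ)).sub ((hasDerivAt_const u (2:ℝ)).mul (hasDerivAt_id u))
      refine h.congr_deriv (Eq.symm ?_); ring
    have hden : HasDerivAt (fun u : ℝ => u ^ 2) (2 * u) u := by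
      simpa using hasDerivAt_pow 2 u
    have h := hnum.div hden (pow_ne_zero 2 (hu0 u hu))
    refine h.congr_deriv (Eq.symm ?_)
    have h0 := hu0 u hu
    simp only [hG'_def]
    field_simp [hG'_def, h0]
    ring
  have hG' : ∀ u ∈ Ioo (0:ℝ) 1, HasDerivAt G' (G'' u) u := by
    intro u hu
    have hnum : HasDerivAt (fun u : ℝ => 2 * u - 2) (2 : ℝ) u := by
      have h := ((hasDerivAt_const u (2:ℝ)).mul (hasDerivAt_id u)).sub (hasDerivAt_const u (2:ℝ))
      refine h.congr_deriv (Eq.symm ?_); ring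
    have hden : HasDerivAt (fun u : ℝ => u ^ 3) (3 * u ^ 2) u := by
      simpa using hasDerivAt_pow 3 u
    have h := hnum.div hden (pow_ne_zero 3 (hu0 u hu))
    refine h.congr_deriv (Eq.symm ?_)
    have h0 := hu0 u hu
    simp only [hG''_def]
    field_simp [hG''_def, h0]
    ring
  -- the Wronskian is nonvanishing
  have hWval : ∀ u ∈ Ioo (0:ℝ) 1, W u = -6 * (1 - u) ^ 2 / u ^ 2 := by
    intro u hu
    have h0 := hu0 u hu
    simp only [hW_def, hf_def, hF'_def, hg_def, hG'_def]
    field_simp [h0]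
    ring
  have hWne : ∀ u ∈ Ioo (0:ℝ) 1, W u ≠ 0 := by
    intro u hu
    rw [hWval u hu]
    have h1 := hu0 u hu
    have h2 := hu1 u hu
    positivity
  -- second derivative from the ODE
  have hφ2 : ∀ u ∈ Ioo (0:ℝ) 1, φ'' u = (2 * (1 - u) * φ u - 2 * u * φ' u) / (u ^ 2 * (1 - u)) := by
    intro u hu
    have h := hode u hu
    field_simp [hu0 u hu, hu1 u hu]
    linarith
  -- derivative facts for numerators and W
  have hN₁' : ∀ u ∈ Ioo (0:ℝ) 1, HasDerivAt N₁ (φ u * G'' u - φ'' u * g u) u := by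
    intro u hu
    have h := ((hφ' u hu).mul (hG' u hu)).sub ((hφ'' u hu).mul (hg u hu))
    refine h.congr_deriv (Eq.symm ?_)
    ring
  have hN₂' : ∀ u ∈ Ioo (0:ℝ) 1, HasDerivAt N₂ (f u * φ'' u + 2 * φ u) u := by
    intro u hu
    have h := ((hf u hu).mul (hφ'' u hu)).sub ((hF' u hu).mul (hφ' u hu))
    refine h.congr_deriv (Eq.symm ?_)
    ring
  have hW' : ∀ u ∈ Ioo (0:ℝ) 1, HasDerivAt W (f u * G'' u + 2 * g u) u := by
    intro u hu
    have h := ((hf u hu).mul (hG' u hu)).sub ((hF' u hu).mul (hg u hu))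
    refine h.congr_deriv (Eq.symm ?_)
    ring
  -- the two quotients have zero derivative
  have hA : ∀ u ∈ Ioo (0:ℝ) 1, HasDerivAt (fun u => N₁ u / W u) 0 u := by
    intro u hu
    have h := (hN₁' u hu).div (hW' u hu) (hWne u hu)
    refine h.congr_deriv (Eq.symm ?_)
    rw [eq_comm, div_eq_zero_iff]
    left
    have h0 := hu0 u hu
    have h1 := hu1 u hu
    simp only [hN₁_def, hW_def, hf_def, hF'_def, hg_def, hG'_def, hG''_def, hφ2 u hu]
    field_simp
    ring
  have hB : ∀ u ∈ Ioo (0:ℝ) 1, HasDerivAt (fun u => N₂ u / W u) 0 u := by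
    intro u hu
    have h := (hN₂' u hu).div (hW' u hu) (hWne u hu)
    refine h.congr_deriv (Eq.symm ?_)
    rw [eq_comm, div_eq_zero_iff]
    left
    have h0 := hu0 u hu
    have h1 := hu1 u hu
    simp only [hN₁_def, hN₂_def, hW_def, hf_def, hF'_def, hg_def, hG'_def, hG''_def, hφ2 u hu]
    field_simp
    ring
  -- conclude
  have hhalf : (1/2 : ℝ) ∈ Ioo (0:ℝ) 1 := by norm_num
  refine ⟨N₁ (1/2) / W (1/2), N₂ (1/2) / W (1/2), fun u hu => ?_⟩
  have hC1 : N₁ u / W u = N₁ (1/2) / W (1/2) := const_on_aux _ hA hu hhalf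
  have hC2 : N₂ u / W u = N₂ (1/2) / W (1/2) := const_on_aux _ hB hu hhalf
  rw [← hC1, ← hC2]
  have h0 := hu0 u hu
  have key : N₁ u * f u + N₂ u * g u = φ u * W u := by
    simp only [hN₁_def, hN₂_def, hW_def]
    ring
  have hWu := hWne u hu
  have : u⁻¹ ^ 2 * (1 - 2 * u) = g u := by
    simp only [hg_def]
    field_simp
  rw [this, show u * (2 - u) = f u from rfl, div_mul_eq_mul_div, div_mul_eq_mul_div,
    ← add_div, key, mul_div_assoc, div_self hWu, mul_one]
end

section
/- For each fixed C₁, C₂ ∈ ℝ, the function ψ(u) = C₁(2-u)/(1-u)³ + C₂(1-2u)/(u³(1-u)³) satisfies the hypergeometric differential equation u(1-u)ψ''(u) + (4-8u)ψ'(u) - 10ψ(u) = 0 for all u ∈ (0,1). -/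
open Set

private lemma aux_d1 (C₁ C₂ : ℝ) (u : ℝ) (h0 : u ≠ 0) (h1 : (1:ℝ) - u ≠ 0) :
    HasDerivAt (fun u => C₁ * (2 - u) / (1 - u) ^ 3 + C₂ * (1 - 2 * u) / (u ^ 3 * (1 - u) ^ 3))
      (C₁ * (5 - 2 * u) / (1 - u) ^ 4
        + C₂ * (-3 + 10 * u - 10 * u ^ 2) / (u ^ 4 * (1 - u) ^ 4)) u := by
  have hid := hasDerivAt_id u
  have hnum1 : HasDerivAt (fun u : ℝ => C₁ * (2 - u)) (C₁ * (-1)) u :=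
    (hid.const_sub 2).const_mul C₁
  have hden1 : HasDerivAt (fun u : ℝ => (1 - u) ^ 3)
      (3 * (1 - u) ^ 2 * (-1)) u := by
    simpa using (hid.const_sub 1).fun_pow 3
  have hnum2 : HasDerivAt (fun u : ℝ => C₂ * (1 - 2 * u)) (C₂ * (-(2 * 1))) u :=
    ((hid.const_mul 2).const_sub 1).const_mul C₂
  have hden2 : HasDerivAt (fun u : ℝ => u ^ 3 * (1 - u) ^ 3)
      (3 * u ^ 2 * (1 - u) ^ 3 + u ^ 3 * (3 * (1 - u) ^ 2 * (-1))) u := by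
    have := (hasDerivAt_pow 3 u).fun_mul ((hid.const_sub 1).fun_pow 3)
    simpa [mul_comm, mul_assoc, mul_left_comm] using this
  have hd1 := hnum1.fun_div hden1 (pow_ne_zero 3 h1)
  have hd2 := hnum2.fun_div hden2 (mul_ne_zero (pow_ne_zero 3 h0) (pow_ne_zero 3 h1))
  have := hd1.fun_add hd2
  refine this.congr_deriv ?_
  field_simp
  ring

private lemma aux_d2 (C₁ C₂ : ℝ) (u : ℝ) (h0 : u ≠ 0) (h1 : (1:ℝ) - u ≠ 0) :
    HasDerivAt (fun u => C₁ * (5 - 2 * u) / (1 - u) ^ 4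
        + C₂ * (-3 + 10 * u - 10 * u ^ 2) / (u ^ 4 * (1 - u) ^ 4))
      (C₁ * 6 * (3 - u) / (1 - u) ^ 5
        + C₂ * (12 - 54 * u + 90 * u ^ 2 - 60 * u ^ 3) / (u ^ 5 * (1 - u) ^ 5)) u := by
  have hid := hasDerivAt_id u
  have hnum1 : HasDerivAt (fun u : ℝ => C₁ * (5 - 2 * u)) (C₁ * (-(2 * 1))) u :=
    ((hid.const_mul 2).const_sub 5).const_mul C₁
  have hden1 : HasDerivAt (fun u : ℝ => (1 - u) ^ 4)
      (4 * (1 - u) ^ 3 * (-1)) u := by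
    simpa using (hid.const_sub 1).fun_pow 4
  have hnum2 : HasDerivAt (fun u : ℝ => C₂ * (-3 + 10 * u - 10 * u ^ 2))
      (C₂ * (10 * 1 - 10 * (2 * u ^ 1 * 1))) u := by
    have h : HasDerivAt (fun u : ℝ => -3 + 10 * u - 10 * u ^ 2)
        (10 * 1 - 10 * (2 * u ^ 1 * 1)) u :=
      ((hid.const_mul 10).const_add (-3)).sub ((hid.pow 2).const_mul 10)
    exact h.const_mul C₂
  have hden2 : HasDerivAt (fun u : ℝ => u ^ 4 * (1 - u) ^ 4)
      (4 * u ^ 3 * (1 - u) ^ 4 + u ^ 4 * (4 * (1 - u) ^ 3 * (-1))) u := by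
    have := (hasDerivAt_pow 4 u).fun_mul ((hid.const_sub 1).fun_pow 4)
    simpa [mul_comm, mul_assoc, mul_left_comm] using this
  have hd1 := hnum1.fun_div hden1 (pow_ne_zero 4 h1)
  have hd2 := hnum2.fun_div hden2 (mul_ne_zero (pow_ne_zero 4 h0) (pow_ne_zero 4 h1))
  have := hd1.fun_add hd2
  refine this.congr_deriv ?_
  field_simp
  ring

/-- For any constants `C₁, C₂`, the function
`ψ(u) = C₁(2-u)/(1-u)³ + C₂(1-2u)/(u³(1-u)³)` satisfies
`u(1-u)ψ'' + (4-8u)ψ' - 10ψ = 0` on `(0,1)`. -/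
theorem stmt_3 (C₁ C₂ : ℝ) (ψ : ℝ → ℝ)
    (hψ : ψ = fun u => C₁ * (2 - u) / (1 - u) ^ 3 + C₂ * (1 - 2 * u) / (u ^ 3 * (1 - u) ^ 3)) :
    ∀ u ∈ Ioo (0:ℝ) 1,
      u * (1 - u) * deriv (deriv ψ) u + (4 - 8 * u) * deriv ψ u - 10 * ψ u = 0 := by
  intro u hu
  obtain ⟨hu0, hu1⟩ := hu
  have h0 : u ≠ 0 := ne_of_gt hu0
  have h1 : (1:ℝ) - u ≠ 0 := sub_ne_zero.mpr (ne_of_gt hu1)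
  set ψ' : ℝ → ℝ := fun u => C₁ * (5 - 2 * u) / (1 - u) ^ 4
        + C₂ * (-3 + 10 * u - 10 * u ^ 2) / (u ^ 4 * (1 - u) ^ 4) with hψ'
  have hderiv : ∀ v ∈ Ioo (0:ℝ) 1, deriv ψ v = ψ' v := by
    intro v hv
    have h0' : v ≠ 0 := ne_of_gt hv.1
    have h1' : (1:ℝ) - v ≠ 0 := sub_ne_zero.mpr (ne_of_gt hv.2)
    rw [hψ]
    exact (aux_d1 C₁ C₂ v h0' h1').deriv
  have hEq : deriv ψ =ᶠ[nhds u] ψ' :=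
    Filter.eventuallyEq_of_mem (isOpen_Ioo.mem_nhds ⟨hu0, hu1⟩) hderiv
  have h2 : deriv (deriv ψ) u = C₁ * 6 * (3 - u) / (1 - u) ^ 5
        + C₂ * (12 - 54 * u + 90 * u ^ 2 - 60 * u ^ 3) / (u ^ 5 * (1 - u) ^ 5) := by
    rw [hEq.deriv_eq]
    exact (aux_d2 C₁ C₂ u h0 h1).deriv
  rw [h2, hderiv u ⟨hu0, hu1⟩, hψ']
  rw [hψ]
  field_simp
  ring
end

section
/- Let f(z) = (iz+1)/(z+i) map ℍ onto the unit disk 𝔻, let H_{∂𝔻}(e^{is}, e^{it}) = 1/(2π(1-cos(t-s))) be the excursion Poisson kernel of 𝔻, and set a = f(0) = -i, b = f(∞) = i, c = f(x), d = f(y). Then for real numbers 0 < x < y, [H_{∂𝔻}(f(0),f(∞))·H_{∂𝔻}(f(x),f(y)) - H_{∂𝔻}(f(0),f(y))·H_{∂𝔻}(f(x),f(∞))] / [H_{∂𝔻}(f(0),f(∞))·H_{∂𝔻}(f(x),f(y))] = (x/y)(2 - x/y). -/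
open Complex

/-- The excursion Poisson kernel of the unit disk `𝔻`. -/
noncomputable def Hdisk (u v : ℂ) : ℝ := 1 / (Real.pi * ‖v - u‖ ^ 2)

/-- The conformal map `f(z) = (iz+1)/(z+i)` from `ℍ` onto `𝔻`,
with `f(0) = -i` and `f(∞) = i`. -/
noncomputable def fHD (z : ℂ) : ℂ := (Complex.I * z + 1) / (z + Complex.I)

lemma absq_xI (x : ℝ) : ‖(x : ℂ) + Complex.I‖ ^ 2 = x ^ 2 + 1 := by
  rw [Complex.sq_norm, Complex.normSq_apply]
  simp
  ring

lemma xI_ne (x : ℝ) : ((x : ℂ) + Complex.I) ≠ 0 := by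
  intro h
  have := congrArg Complex.im h
  simp at this

/-- The determinant ratio of the 2×2 excursion hitting matrix computed in the
unit disk at the images of `0, x, y, ∞` under `f(z) = (iz+1)/(z+i)` equals
`(x/y)(2 - x/y)` for real `0 < x < y`. -/
theorem stmt_4 (x y : ℝ) (hx : 0 < x) (hxy : x < y) :
    (Hdisk (-Complex.I) Complex.I * Hdisk (fHD x) (fHD y)
        - Hdisk (-Complex.I) (fHD y) * Hdisk (fHD x) Complex.I)
      / (Hdisk (-Complex.I) Complex.I * Hdisk (fHD x) (fHD y))
    = (x / y) * (2 - x / y) := by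
  have hy : 0 < y := hx.trans hxy
  have hx1 : (0:ℝ) < x ^ 2 + 1 := by positivity
  have hy1 : (0:ℝ) < y ^ 2 + 1 := by positivity
  have hxyne : x - y ≠ 0 := by nlinarith
  have hpi := Real.pi_pos
  have e2 : fHD y - fHD x
      = 2 * ((x : ℂ) - y) / (((y : ℂ) + Complex.I) * ((x : ℂ) + Complex.I)) := by
    unfold fHD
    field_simp [xI_ne x, xI_ne y]
    ring_nf
    simp [Complex.I_sq]
    ring
  have e3 : fHD y - -Complex.I = 2 * Complex.I * (y : ℂ) / ((y : ℂ) + Complex.I) := by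
    unfold fHD
    field_simp [xI_ne y]
    ring_nf
    simp [Complex.I_sq]
  have e4 : Complex.I - fHD x = -2 / ((x : ℂ) + Complex.I) := by
    unfold fHD
    field_simp [xI_ne x]
    ring_nf
    simp [Complex.I_sq]
    norm_num
  have A1 : ‖Complex.I - -Complex.I‖ ^ 2 = 4 := by
    have : Complex.I - -Complex.I = 2 * Complex.I := by ring
    rw [this, norm_mul, Complex.norm_I, Complex.norm_two]
    norm_num
  have A2 : ‖fHD y - fHD x‖ ^ 2 = 4 * (x - y) ^ 2 / ((y ^ 2 + 1) * (x ^ 2 + 1)) := by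
    rw [e2, norm_div, norm_mul, norm_mul, div_pow, mul_pow, mul_pow, absq_xI, absq_xI]
    have : ‖(x : ℂ) - y‖ ^ 2 = (x - y) ^ 2 := by
      rw [← Complex.ofReal_sub, Complex.sq_norm, Complex.normSq_apply]
      simp
      ring
    rw [this]
    norm_num [Complex.norm_two]
  have A3 : ‖fHD y - -Complex.I‖ ^ 2 = 4 * y ^ 2 / (y ^ 2 + 1) := by
    rw [e3, norm_div, norm_mul, norm_mul, div_pow, mul_pow, mul_pow, absq_xI]
    have : ‖(y : ℂ)‖ ^ 2 = y ^ 2 := by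
      rw [Complex.sq_norm, Complex.normSq_apply]; simp; ring
    rw [this]
    norm_num [Complex.norm_two]
  have A4 : ‖Complex.I - fHD x‖ ^ 2 = 4 / (x ^ 2 + 1) := by
    rw [e4, norm_div, div_pow, absq_xI]
    norm_num [Complex.norm_two]
  unfold Hdisk
  rw [A1, A2, A3, A4]
  have hyne : y ≠ 0 := hy.ne'
  field_simp
  ring
end

section
/- Let A be a finite subset of ℤ², and for boundary points a, b ∈ ∂A let K_A(a,b) denote the set of discrete excursions in A from a to b (nearest-neighbor paths ω = [ω₀,...,ω_k] with ω₀ = a, ω_k = b, ω₁,...,ω_{k-1} ∈ A, k ≥ 2), weighted by p(ω) = 4^{-|ω|}. Fix x¹, x², y², y¹ ∈ ∂A. Let Γ¹ be the set of pairs (ω¹,ω²) ∈ K_A(x¹,y¹) × K_A(x²,y²) such that the loop erasure L(ω¹) intersects ω², and let Γ² = K_A(x¹,y²) × K_A(x²,y¹), and assume every pair in Γ² has L(ω¹²) ∩ ω²¹ ≠ ∅ (which holds when x¹,x²,y²,y¹ are ordered counterclockwise around the boundary of a simply connected A). Then there is a bijection Λ : Γ¹ → Γ² with p(ω¹)p(ω²)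 = p(Λω¹)p(Λω²) for all (ω¹,ω²) ∈ Γ¹, obtained by swapping the tails of the two paths after their respective last visits to the first point of L(ω¹) hit by ω². -/
/-! Definitions for discrete excursions and loop-erased walks on `ℤ²`. -/

/-- Adjacency on `ℤ²`. -/
def Zadj (v w : ℤ × ℤ) : Prop := (v.1 - w.1).natAbs + (v.2 - w.2).natAbs = 1

/-- The (outer) boundary of `A ⊂ ℤ²`. -/
def Zbd (A : Finset (ℤ × ℤ)) : Set (ℤ × ℤ) := {z | z ∉ A ∧ ∃ w ∈ A, Zadj z w}

/-- `ω` is a discrete excursion in `A` from `a` to `b`: a nearest-neighbor path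
with endpoints `a, b ∈ ∂A`, interior vertices in `A`, of length `≥ 2` steps. -/
def IsExcursion (A : Finset (ℤ × ℤ)) (a b : ℤ × ℤ) (ω : List (ℤ × ℤ)) : Prop :=
  3 ≤ ω.length ∧ ω.head? = some a ∧ ω.getLast? = some b ∧
  a ∈ Zbd A ∧ b ∈ Zbd A ∧
  (∀ i, i + 1 < ω.length → Zadj (ω.getD i 0) (ω.getD (i + 1) 0)) ∧
  (∀ i, 0 < i → i + 1 < ω.length → ω.getD i 0 ∈ A)

/-- Simple random walk weight `p(ω) = 4^{-|ω|}` where `|ω|` is the number of steps. -/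
noncomputable def wt (ω : List (ℤ × ℤ)) : ℝ := (1 / 4 : ℝ) ^ (ω.length - 1)

/-- The portion of `l` strictly after the last occurrence of `x` (all of `l` if `x ∉ l`). -/
def afterLast (x : ℤ × ℤ) (l : List (ℤ × ℤ)) : List (ℤ × ℤ)  :=
  (l.reverse.takeWhile (fun y => decide (y ≠ x))).reverse

/-- Chronological loop erasure of a path. -/
def loopErase : List (ℤ × ℤ) → List (ℤ × ℤ)
  | [] => []
  | x :: xs => x :: loopErase (afterLast x xs)
termination_by l => l.length
decreasing_by
  simp only [afterLast, List.length_reverse, List.length_cons]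
  have h := (List.takeWhile_sublist (fun y => decide (y ≠ x)) (l := xs.reverse)).length_le
  simp only [List.length_reverse] at h
  omega

/-- The discrete excursion Poisson kernel `h_{∂A}(a,b)`: total simple random walk
excursion measure of excursions in `A` from `a` to `b`. -/
noncomputable def hbd (A : Finset (ℤ × ℤ)) (a b : ℤ × ℤ) : ℝ :=
  ∑' ω : {ω : List (ℤ × ℤ) // IsExcursion A a b ω}, wt ω.val

/-- A set of lattice points is connected (as a subgraph of `ℤ²`). -/
def ZconnectedIn (S : Set (ℤ × ℤ)) : Prop :=
  ∀ v ∈ S, ∀ w ∈ S, Relation.ReflTransGen (fun a b => Zadj a b ∧ a ∈ S ∧ b ∈ S) v w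

/-- `A` is simply connected: `A` and its complement are nonempty and connected. -/
def ZSimplyConnected (A : Finset (ℤ × ℤ)) : Prop :=
  (A : Set (ℤ × ℤ)).Nonempty ∧ ((A : Set (ℤ × ℤ))ᶜ).Nonempty ∧
  ZconnectedIn (A : Set (ℤ × ℤ)) ∧ ZconnectedIn ((A : Set (ℤ × ℤ))ᶜ)

/-- The four boundary points `x¹, x², y², y¹` are ordered counterclockwise around
`∂A`: they are distinct boundary points, and (the operative topological consequence
of the ordering) every excursion in `A` from `x¹` to `y²` intersects every excursion
in `A` from `x²` to `y¹`. -/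
def CCWOrdered (A : Finset (ℤ × ℤ)) (x₁ x₂ y₂ y₁ : ℤ × ℤ) : Prop :=
  x₁ ∈ Zbd A ∧ x₂ ∈ Zbd A ∧ y₂ ∈ Zbd A ∧ y₁ ∈ Zbd A ∧
  List.Pairwise (· ≠ ·) [x₁, x₂, y₂, y₁] ∧
  ∀ ω ω' : List (ℤ × ℤ), IsExcursion A x₁ y₂ ω → IsExcursion A x₂ y₁ ω' →
    ∃ v, v ∈ ω ∧ v ∈ ω'

-- ### part 1 lemmas
def upToLast (x : ℤ × ℤ) (l : List (ℤ × ℤ)) : List (ℤ × ℤ) :=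
  (l.reverse.dropWhile (fun y => decide (y ≠ x))).reverse

lemma upToLast_append_afterLast (x : ℤ × ℤ) (l : List (ℤ × ℤ)) :
    upToLast x l ++ afterLast x l = l := by
  rw [upToLast, afterLast, ← List.reverse_append, List.takeWhile_append_dropWhile,
    List.reverse_reverse]

lemma not_mem_afterLast (x : ℤ × ℤ) (l : List (ℤ × ℤ)) : x ∉ afterLast x l := by
  intro h
  rw [afterLast, List.mem_reverse] at h
  have := List.mem_takeWhile_imp h
  simp at this

lemma afterLast_suffix (x : ℤ × ℤ) (l : List (ℤ × ℤ)) : afterLast x l <:+ l := by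
  rw [afterLast, ← List.reverse_reverse l, List.reverse_suffix, List.reverse_reverse]
  exact List.takeWhile_prefix _

lemma afterLast_of_not_mem {x : ℤ × ℤ} {l : List (ℤ × ℤ)} (h : x ∉ l) :
    afterLast x l = l := by
  rw [afterLast, List.takeWhile_eq_self_iff.2, List.reverse_reverse]
  intro y hy
  simp only [decide_eq_true_iff]
  rintro rfl; exact h (List.mem_reverse.1 hy)

lemma afterLast_append {x : ℤ × ℤ} {X Y : List (ℤ × ℤ)} (h : x ∉ Y) :
    afterLast x (X ++ Y) = afterLast x X ++ Y := by
  rw [afterLast, afterLast, List.reverse_append, List.takeWhile_append,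
    if_pos, List.reverse_append, List.reverse_reverse]
  rw [List.takeWhile_eq_self_iff.2]
  intro y hy
  simp only [decide_eq_true_iff]
  rintro rfl; exact h (List.mem_reverse.1 hy)

lemma afterLast_concat_self (x : ℤ × ℤ) (l : List (ℤ × ℤ)) :
    afterLast x (l ++ [x]) = [] := by
  rw [afterLast, List.reverse_append]
  simp [List.takeWhile_cons]

lemma afterLast_concat {x : ℤ × ℤ} {X Y : List (ℤ × ℤ)} (h : x ∉ Y) :
    afterLast x (X ++ x :: Y) = Y := by
  have : X ++ x :: Y = (X ++ [x]) ++ Y := by simp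
  rw [this, afterLast_append h, afterLast_concat_self, List.nil_append]

lemma upToLast_concat {x : ℤ × ℤ} {X Y : List (ℤ × ℤ)} (h : x ∉ Y) :
    upToLast x (X ++ x :: Y) = X ++ [x] := by
  have h1 := upToLast_append_afterLast x (X ++ x :: Y)
  rw [afterLast_concat h] at h1
  have h2 : X ++ x :: Y = (X ++ [x]) ++ Y := by simp
  rw [h2] at h1
  have := List.append_cancel_right h1
  rw [h2]; exact this

lemma loopErase_cons (x : ℤ × ℤ) (xs : List (ℤ × ℤ)) :
    loopErase (x :: xs) = x :: loopErase (afterLast x xs) := by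
  rw [loopErase]

lemma mem_of_mem_loopErase {w : ℤ × ℤ} : ∀ {l : List (ℤ × ℤ)}, w ∈ loopErase l → w ∈ l
  | [], h => by simpa [loopErase] using h
  | x :: xs, h => by
    rw [loopErase_cons] at h
    rcases List.mem_cons.1 h with rfl | h
    · exact List.mem_cons_self
    · exact List.mem_cons_of_mem _ ((afterLast_suffix x xs).subset (mem_of_mem_loopErase h))
termination_by l => l.length
decreasing_by
  have := (afterLast_suffix x xs).length_le
  simp only [List.length_cons]; omega

-- ### part 2

lemma takeWhile_split {p : ℤ × ℤ → Bool} {T r : List (ℤ × ℤ)} {v : ℤ × ℤ}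
    (hT : ∀ w ∈ T, p w = true) (hv : p v = false) :
    List.takeWhile p (T ++ v :: r) = T := by
  rw [List.takeWhile_append, if_pos, List.takeWhile_cons, if_neg (by simp [hv]),
    List.append_nil]
  rw [List.takeWhile_eq_self_iff.2 hT]

lemma dropWhile_split {p : ℤ × ℤ → Bool} {T r : List (ℤ × ℤ)} {v : ℤ × ℤ}
    (hT : ∀ w ∈ T, p w = true) (hv : p v = false) :
    List.dropWhile p (T ++ v :: r) = v :: r := by
  rw [List.dropWhile_append, if_pos, List.dropWhile_cons, if_neg (by simp [hv])]
  rw [List.dropWhile_eq_nil_iff.2 hT]; rfl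

lemma afterLast_mem_right {x : ℤ × ℤ} {X Y : List (ℤ × ℤ)} (h : x ∈ Y) :
    afterLast x (X ++ Y) = afterLast x Y := by
  rw [afterLast, afterLast, List.reverse_append, List.takeWhile_append, if_neg]
  intro hlen
  have hpre := List.takeWhile_prefix (l := Y.reverse) (fun y => decide (y ≠ x))
  have : List.takeWhile (fun y => decide (y ≠ x)) Y.reverse = Y.reverse :=
    hpre.eq_of_length hlen
  have := List.takeWhile_eq_self_iff.1 this x (List.mem_reverse.2 h)
  simp at this

lemma core (v : ℤ × ℤ) : ∀ (n : ℕ) (α β δ : List (ℤ × ℤ)), α.length ≤ n → v ∉ β → v ∉ δ →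
    v ∈ loopErase (α ++ v :: β) →
    (∀ w ∈ (loopErase (α ++ v :: β)).takeWhile (fun y => decide (y ≠ v)), w ∉ v :: δ) →
    loopErase (α ++ v :: δ) =
      (loopErase (α ++ v :: β)).takeWhile (fun y => decide (y ≠ v)) ++ v :: loopErase δ
    ∧ ∀ w ∈ (loopErase (α ++ v :: β)).takeWhile (fun y => decide (y ≠ v)), w ∉ v :: β := by
  intro n
  induction n with
  | zero =>
    intro α β δ hlen hβ hδ hv hT
    have hα : α = [] := List.length_eq_zero_iff.1 (Nat.le_zero.1 hlen)
    subst hα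
    simp only [List.nil_append] at *
    rw [loopErase_cons, afterLast_of_not_mem hβ] at *
    rw [loopErase_cons, afterLast_of_not_mem hδ]
    simp [List.takeWhile_cons]
  | succ n IH =>
    intro α β δ hlen hβ hδ hv hT
    match α with
    | [] =>
      simp only [List.nil_append] at *
      rw [loopErase_cons, afterLast_of_not_mem hβ] at *
      rw [loopErase_cons, afterLast_of_not_mem hδ]
      simp [List.takeWhile_cons]
    | x :: α' =>
      by_cases hxv : x = v
      · subst hxv
        have e1 : ∀ Y : List (ℤ × ℤ), x ∉ Y → loopErase ((x :: α') ++ x :: Y) = x :: loopErase Y := by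
          intro Y hY
          rw [List.cons_append, loopErase_cons, afterLast_concat hY]
        rw [e1 β hβ] at *
        rw [e1 δ hδ]
        simp [List.takeWhile_cons]
      · -- x ≠ v
        have hconsalt : (x :: α') ++ v :: β = x :: (α' ++ v :: β) := rfl
        rw [hconsalt, loopErase_cons] at hv hT
        -- step 1 : x ∉ β
        have hxβ : x ∉ β := by
          intro hxmem
          have h1 : afterLast x (α' ++ v :: β) = afterLast x β := by
            have : α' ++ v :: β = (α' ++ [v]) ++ β := by simp
            rw [this, afterLast_mem_right hxmem]
          rw [h1] at hv
          have hv2 : v ∈ loopErase (afterLast x β) := by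
            rcases List.mem_cons.1 hv with h | h
            · exact absurd h.symm hxv
            · exact h
          exact hβ ((afterLast_suffix x β).subset (mem_of_mem_loopErase hv2))
        have hxvβ : x ∉ v :: β := by
          simp only [List.mem_cons, not_or]; exact ⟨hxv, hxβ⟩
        -- step 2 : x ∉ v :: δ
        have hxvδ : x ∉ v :: δ := by
          apply hT
          rw [List.takeWhile_cons, if_pos (by simp [hxv])]
          exact List.mem_cons_self
        -- rewrite afterLast
        have hAβ : afterLast x (α' ++ v :: β) = afterLast x α' ++ v :: β :=
          afterLast_append hxvβ
        have hAδ : afterLast x (α' ++ v :: δ) = afterLast x α' ++ v :: δ :=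
          afterLast_append hxvδ
        rw [hAβ] at hv hT
        have hlen'' : (afterLast x α').length ≤ n := by
          have h1 := (afterLast_suffix x α').length_le
          simp only [List.length_cons] at hlen
          omega
        set α'' := afterLast x α' with hα''
        have hv' : v ∈ loopErase (α'' ++ v :: β) := by
          rcases List.mem_cons.1 hv with h | h
          · exact absurd h.symm hxv
          · exact h
        have htwcons : (x :: loopErase (α'' ++ v :: β)).takeWhile (fun y => decide (y ≠ v))
            = x :: (loopErase (α'' ++ v :: β)).takeWhile (fun y => decide (y ≠ v)) := by
          rw [List.takeWhile_cons, if_pos (by simp [hxv])]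
        rw [htwcons] at hT
        have hT' : ∀ w ∈ (loopErase (α'' ++ v :: β)).takeWhile (fun y => decide (y ≠ v)),
            w ∉ v :: δ := fun w hw => hT w (List.mem_cons_of_mem _ hw)
        obtain ⟨g1, g2⟩ := IH α'' β δ hlen'' hβ hδ hv' hT'
        constructor
        · rw [List.cons_append, loopErase_cons, hAδ, g1, hconsalt, loopErase_cons, hAβ,
            htwcons, List.cons_append]
        · rw [hconsalt, loopErase_cons, hAβ, htwcons]
          intro w hw
          rcases List.mem_cons.1 hw with rfl | hw
          · exact hxvβ
          · exact g2 w hw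

-- ### part 3 : excursion facts

lemma head_dropWhile_false {p : ℤ × ℤ → Bool} :
    ∀ {l r : List (ℤ × ℤ)} {v : ℤ × ℤ}, List.dropWhile p l = v :: r → p v = false := by
  intro l
  induction l with
  | nil => intro r v h; simp [List.dropWhile] at h
  | cons x xs ih =>
    intro r v h
    rw [List.dropWhile_cons] at h
    by_cases hx : p x = true
    · rw [if_pos hx] at h; exact ih h
    · rw [if_neg hx] at h
      obtain ⟨rfl, -⟩ := List.cons.injEq .. ▸ h
      · simpa using hx

lemma excursion_mem_cases {A : Finset (ℤ × ℤ)} {a b w : ℤ × ℤ} {ω : List (ℤ × ℤ)}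
    (hex : IsExcursion A a b ω) (hw : w ∈ ω) : w = a ∨ w = b ∨ w ∈ A := by
  obtain ⟨hlen, hhead, hlast, -, -, -, hint⟩ := hex
  obtain ⟨i, hi, hgi⟩ := List.getElem_of_mem hw
  have hgD : ω.getD i 0 = w := by
    rw [List.getD_eq_getElem?_getD, List.getElem?_eq_getElem hi, Option.getD_some, hgi]
  rcases Nat.eq_zero_or_pos i with rfl | hpos
  · left
    rw [List.head?_eq_getElem?, List.getElem?_eq_getElem hi, hgi] at hhead
    exact Option.some_inj.1 hhead
  rcases eq_or_lt_of_le (Nat.succ_le_of_lt hi) with heq | hlt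
  · right; left
    rw [List.getLast?_eq_getElem?] at hlast
    have : ω.length - 1 = i := by omega
    rw [this, List.getElem?_eq_getElem hi, hgi] at hlast
    exact Option.some_inj.1 hlast
  · right; right
    rw [← hgD]
    exact hint i hpos hlt

lemma excursion_split {A : Finset (ℤ × ℤ)} {a b v : ℤ × ℤ} {ω : List (ℤ × ℤ)}
    (hex : IsExcursion A a b ω) (hv : v ∈ ω) (hva : v ≠ a) (hvb : v ≠ b) :
    ∃ α β : List (ℤ × ℤ), ω = α ++ v :: β ∧ α ≠ [] ∧ β ≠ [] ∧
      upToLast v ω = α ++ [v] ∧ afterLast v ω = β := by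
  have hdec := upToLast_append_afterLast v ω
  have hvnotafter := not_mem_afterLast v ω
  have hUne : upToLast v ω ≠ [] := by
    intro h0
    rw [h0, List.nil_append] at hdec
    rw [← hdec] at hv
    exact hvnotafter hv
  have hUlast : (upToLast v ω).getLast hUne = v := by
    have hne2 : ω.reverse.dropWhile (fun y => decide (y ≠ v)) ≠ [] := by
      intro h2
      have : upToLast v ω = [] := by rw [upToLast, h2]; rfl
      exact hUne this
    have hr : (ω.reverse.dropWhile (fun y => decide (y ≠ v))).head? = some v := by
      obtain ⟨w, r, hwr⟩ := List.exists_cons_of_ne_nil hne2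
      have := head_dropWhile_false hwr
      simp only [decide_eq_false_iff_not, not_not] at this
      rw [hwr, this, List.head?_cons]
    have h3 : (upToLast v ω).getLast? = some v := by
      rw [upToLast, List.getLast?_reverse]; exact hr
    rw [List.getLast?_eq_getLast hUne] at h3
    exact Option.some_inj.1 h3
  refine ⟨(upToLast v ω).dropLast, afterLast v ω, ?_, ?_, ?_, ?_, rfl⟩
  · conv_lhs => rw [← hdec]
    conv_lhs => rw [← List.dropLast_append_getLast hUne, hUlast]
    simp
  · intro h0
    have : upToLast v ω = [v] := by
      conv_lhs => rw [← List.dropLast_append_getLast hUne, hUlast, h0]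
      rfl
    rw [this] at hdec
    have : ω.head? = some v := by rw [← hdec]; rfl
    rw [hex.2.1] at this
    exact hva (Option.some_inj.1 this).symm
  · intro h0
    rw [h0] at hdec
    have : ω.getLast? = some v := by
      rw [← hdec, List.getLast?_append, List.getLast?_eq_getLast hUne, hUlast]
      rfl
    rw [hex.2.2.1] at this
    exact hvb (Option.some_inj.1 this).symm
  · conv_lhs => rw [← List.dropLast_append_getLast hUne, hUlast]

-- ### part 4 : gluing excursions

lemma getD_left_eq {X Y Z : List (ℤ × ℤ)} {i : ℕ} (hi : i < X.length) :
    (X ++ Y).getD i 0 = (X ++ Z).getD i 0 := by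
  rw [List.getD_append _ _ _ _ hi, List.getD_append _ _ _ _ hi]

lemma getD_right_eq (X Y : List (ℤ × ℤ)) (k : ℕ) :
    (X ++ Y).getD (X.length + k) 0 = Y.getD k 0 := by
  rw [List.getD_append_right _ _ _ _ (Nat.le_add_right _ _), Nat.add_sub_cancel_left]

lemma glue {A : Finset (ℤ × ℤ)} {a b c d v : ℤ × ℤ} {α β γ δ : List (ℤ × ℤ)}
    (h1 : IsExcursion A a b (α ++ v :: β)) (h2 : IsExcursion A c d (γ ++ v :: δ))
    (hα : α ≠ []) (hβ : β ≠ []) (hγ : γ ≠ []) (hδ : δ ≠ []) :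
    IsExcursion A a d (α ++ v :: δ) := by
  obtain ⟨hlen1, hhead1, hlast1, haZ, hbZ, hadj1, hint1⟩ := h1
  obtain ⟨hlen2, hhead2, hlast2, hcZ, hdZ, hadj2, hint2⟩ := h2
  have hαpos : 0 < α.length := List.length_pos_iff.2 hα
  have hβpos : 0 < β.length := List.length_pos_iff.2 hβ
  have hγpos : 0 < γ.length := List.length_pos_iff.2 hγ
  have hδpos : 0 < δ.length := List.length_pos_iff.2 hδ
  have hL1 : (α ++ v :: β).length = α.length + 1 + β.length := by simp; omega
  have hL2 : (γ ++ v :: δ).length = γ.length + 1 + δ.length := by simp; omega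
  have hLη : (α ++ v :: δ).length = α.length + 1 + δ.length := by simp; omega
  -- getD: positions ≤ α.length agree with ω₁
  have hleft : ∀ i ≤ α.length, (α ++ v :: δ).getD i 0 = (α ++ v :: β).getD i 0 := by
    intro i hi
    have e1 : α ++ v :: δ = (α ++ [v]) ++ δ := by simp
    have e2 : α ++ v :: β = (α ++ [v]) ++ β := by simp
    rw [e1, e2]
    exact getD_left_eq (by simp; omega)
  -- getD: positions α.length + k agree with ω₂ at γ.length + k
  have hright : ∀ k, (α ++ v :: δ).getD (α.length + k) 0
      = (γ ++ v :: δ).getD (γ.length + k) 0 := by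
    intro k
    rw [getD_right_eq α (v :: δ), getD_right_eq γ (v :: δ)]
  refine ⟨by omega, ?_, ?_, haZ, hdZ, ?_, ?_⟩
  · rw [List.head?_append, List.head?_eq_head hα]
    rw [List.head?_append, List.head?_eq_head hα] at hhead1
    exact hhead1
  · rw [List.getLast?_append]
    rw [List.getLast?_append] at hlast2
    have : (v :: δ).getLast? = some ((v :: δ).getLast (by simp)) :=
      List.getLast?_eq_getLast _
    rw [this] at hlast2 ⊢
    exact hlast2
  · -- adjacency
    intro i hi
    rw [hLη] at hi
    rcases Nat.lt_or_ge (i + 1) (α.length + 1) with hc | hc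
    · rw [hleft i (by omega), hleft (i + 1) (by omega)]
      exact hadj1 i (by omega)
    · obtain ⟨k, rfl⟩ : ∃ k, i = α.length + k := ⟨i - α.length, by omega⟩
      have e3 : α.length + k + 1 = α.length + (k + 1) := by omega
      have e4 : γ.length + k + 1 = γ.length + (k + 1) := by omega
      rw [e3, hright k, hright (k + 1), ← e4]
      exact hadj2 (γ.length + k) (by omega)
  · -- interior
    intro i hipos hi
    rw [hLη] at hi
    rcases Nat.lt_or_ge i (α.length + 1) with hc | hc
    · rw [hleft i (by omega)]
      exact hint1 i hipos (by omega)
    · obtain ⟨k, rfl⟩ : ∃ k, i = α.length + k := ⟨i - α.length, by omega⟩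
      rw [hright k]
      exact hint2 (γ.length + k) (by omega) (by omega)

-- ### part 5 : the swap map

def swapPair (p : List (ℤ × ℤ) × List (ℤ × ℤ)) : List (ℤ × ℤ) × List (ℤ × ℤ) :=
  match ((loopErase p.1).dropWhile (fun w => decide (w ∉ p.2))).head? with
  | none => p
  | some v => (upToLast v p.1 ++ afterLast v p.2, upToLast v p.2 ++ afterLast v p.1)

lemma swapPair_eq_of {p : List (ℤ × ℤ) × List (ℤ × ℤ)} {v : ℤ × ℤ}
    (h : ((loopErase p.1).dropWhile (fun w => decide (w ∉ p.2))).head? = some v) :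
    swapPair p = (upToLast v p.1 ++ afterLast v p.2, upToLast v p.2 ++ afterLast v p.1) := by
  rw [swapPair, h]

lemma master {A : Finset (ℤ × ℤ)} {a b c d : ℤ × ℤ} {ω₁ ω₂ : List (ℤ × ℤ)}
    (h1 : IsExcursion A a b ω₁) (h2 : IsExcursion A c d ω₂)
    (hca : c ≠ a) (hcb : c ≠ b) (hda : d ≠ a) (hdb : d ≠ b)
    (hcross : ∃ v ∈ loopErase ω₁, v ∈ ω₂) :
    IsExcursion A a d (swapPair (ω₁, ω₂)).1 ∧ IsExcursion A c b (swapPair (ω₁, ω₂)).2 ∧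
    (∃ v ∈ loopErase (swapPair (ω₁, ω₂)).1, v ∈ (swapPair (ω₁, ω₂)).2) ∧
    swapPair (swapPair (ω₁, ω₂)) = (ω₁, ω₂) ∧
    (swapPair (ω₁, ω₂)).1.length + (swapPair (ω₁, ω₂)).2.length = ω₁.length + ω₂.length := by
  have hDne : (loopErase ω₁).dropWhile (fun w => decide (w ∉ ω₂)) ≠ [] := by
    obtain ⟨v, hvle, hvm⟩ := hcross
    intro h0
    have := List.dropWhile_eq_nil_iff.1 h0 v hvle
    simp [hvm] at this
  obtain ⟨v, r, hD⟩ := List.exists_cons_of_ne_nil hDne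
  have hvm2 : v ∈ ω₂ := by
    have := head_dropWhile_false hD
    simpa using this
  have hvsub : v ∈ loopErase ω₁ := by
    apply (List.dropWhile_sublist (fun w => decide (w ∉ ω₂))).subset
    rw [hD]; exact List.mem_cons_self
  have hvm1 : v ∈ ω₁ := mem_of_mem_loopErase hvsub
  have hdec : loopErase ω₁
      = (loopErase ω₁).takeWhile (fun w => decide (w ∉ ω₂)) ++ v :: r := by
    conv_lhs => rw [← List.takeWhile_append_dropWhile (p := fun w => decide (w ∉ ω₂)) (l := loopErase ω₁)]
    rw [hD]
  set T₀ := (loopErase ω₁).takeWhile (fun w => decide (w ∉ ω₂)) with hT₀def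
  have hT₀ : ∀ w ∈ T₀, w ∉ ω₂ := by
    intro w hw
    have := List.mem_takeWhile_imp hw
    simpa using this
  have hvA : v ∈ A := by
    rcases excursion_mem_cases h2 hvm2 with rfl | rfl | h
    · rcases excursion_mem_cases h1 hvm1 with h' | h' | h'
      · exact absurd h' hca
      · exact absurd h' hcb
      · exact h'
    · rcases excursion_mem_cases h1 hvm1 with h' | h' | h'
      · exact absurd h' hda
      · exact absurd h' hdb
      · exact h'
    · exact h
  have haA : a ∉ A := h1.2.2.2.1.1
  have hbA : b ∉ A := h1.2.2.2.2.1.1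
  have hcA : c ∉ A := h2.2.2.2.1.1
  have hdA : d ∉ A := h2.2.2.2.2.1.1
  have hva : v ≠ a := fun h => haA (h ▸ hvA)
  have hvb : v ≠ b := fun h => hbA (h ▸ hvA)
  have hvc : v ≠ c := fun h => hcA (h ▸ hvA)
  have hvd : v ≠ d := fun h => hdA (h ▸ hvA)
  obtain ⟨α, β, hω₁, hαne, hβne, hU1, hA1⟩ := excursion_split h1 hvm1 hva hvb
  obtain ⟨γ, δ, hω₂, hγne, hδne, hU2, hA2⟩ := excursion_split h2 hvm2 hvc hvd
  have hvβ : v ∉ β := by rw [← hA1]; exact not_mem_afterLast v ω₁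
  have hvδ : v ∉ δ := by rw [← hA2]; exact not_mem_afterLast v ω₂
  have hswap : swapPair (ω₁, ω₂) = (α ++ v :: δ, γ ++ v :: β) := by
    rw [swapPair_eq_of (p := (ω₁, ω₂)) (v := v) (by rw [hD]; rfl)]
    show (upToLast v ω₁ ++ afterLast v ω₂, upToLast v ω₂ ++ afterLast v ω₁) = _
    rw [hU1, hU2, hA1, hA2]
    simp
  have hg1 : IsExcursion A a d (α ++ v :: δ) :=
    glue (hω₁ ▸ h1) (hω₂ ▸ h2) hαne hβne hγne hδne
  have hg2 : IsExcursion A c b (γ ++ v :: β) :=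
    glue (hω₂ ▸ h2) (hω₁ ▸ h1) hγne hδne hαne hβne
  -- apply core
  have hTne : ∀ w ∈ T₀, w ≠ v := fun w hw h => hT₀ w hw (h ▸ hvm2)
  have hTW : (loopErase (α ++ v :: β)).takeWhile (fun y => decide (y ≠ v)) = T₀ := by
    rw [← hω₁]
    conv_lhs => rw [hdec]
    exact takeWhile_split (fun w hw => by simpa using hTne w hw) (by simp)
  have hvle' : v ∈ loopErase (α ++ v :: β) := hω₁ ▸ hvsub
  have hcoreh : ∀ w ∈ (loopErase (α ++ v :: β)).takeWhile (fun y => decide (y ≠ v)),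
      w ∉ v :: δ := by
    rw [hTW]
    intro w hw hmem
    exact hT₀ w hw (hω₂ ▸ List.mem_append_right γ hmem)
  obtain ⟨g1, g2⟩ := core v α.length α β δ le_rfl hvβ hvδ hvle' hcoreh
  rw [hTW] at g1 g2
  have hvle2 : v ∈ loopErase (α ++ v :: δ) := by
    rw [g1]; exact List.mem_append_right _ (List.mem_cons_self)
  have hvm2' : v ∈ γ ++ v :: β := List.mem_append_right _ (List.mem_cons_self)
  -- involution
  have hD2 : (loopErase (α ++ v :: δ)).dropWhile (fun w => decide (w ∉ γ ++ v :: β))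
      = v :: loopErase δ := by
    rw [g1]
    apply dropWhile_split
    · intro w hw
      simp only [decide_eq_true_iff]
      intro hmem
      rcases List.mem_append.1 hmem with h | h
      · exact hT₀ w hw (hω₂ ▸ List.mem_append_left _ h)
      · exact g2 w hw h
    · simpa using hvm2'
  have hswap2 : swapPair (α ++ v :: δ, γ ++ v :: β) = (ω₁, ω₂) := by
    rw [swapPair_eq_of (p := (α ++ v :: δ, γ ++ v :: β)) (v := v) (by rw [hD2]; rfl)]
    show (upToLast v (α ++ v :: δ) ++ afterLast v (γ ++ v :: β),
      upToLast v (γ ++ v :: β) ++ afterLast v (α ++ v :: δ)) = _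
    rw [upToLast_concat hvδ, upToLast_concat hvβ, afterLast_concat hvβ, afterLast_concat hvδ,
      hω₁, hω₂]
    simp
  rw [hswap]
  refine ⟨hg1, hg2, ⟨v, hvle2, hvm2'⟩, hswap2, ?_⟩
  rw [hω₁, hω₂]
  simp [List.length_append]
  omega


/-- Fomin's tail-swapping bijection: there is a weight-preserving bijection between
the set `Γ¹` of pairs of excursions (`x¹→y¹`, `x²→y²`) whose loop erasure of the
first intersects the second, and the set `Γ² = K_A(x¹,y²) × K_A(x²,y¹)` of crossed
pairs (all of which have intersecting loop erasure, as holds for counterclockwise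
ordered boundary points of a simply connected `A`). -/
theorem stmt_13 (A : Finset (ℤ × ℤ)) (x₁ x₂ y₂ y₁ : ℤ × ℤ)
    (hsc : ZSimplyConnected A) (hccw : CCWOrdered A x₁ x₂ y₂ y₁)
    (Γ₁ Γ₂ : Set (List (ℤ × ℤ) × List (ℤ × ℤ)))
    (hΓ₁ : Γ₁ = {p | IsExcursion A x₁ y₁ p.1 ∧ IsExcursion A x₂ y₂ p.2 ∧
      ∃ v ∈ loopErase p.1, v ∈ p.2})
    (hΓ₂ : Γ₂ = {p | IsExcursion A x₁ y₂ p.1 ∧ IsExcursion A x₂ y₁ p.2})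
    (hcross : ∀ p ∈ Γ₂, ∃ v ∈ loopErase p.1, v ∈ p.2) :
    ∃ e : Γ₁ ≃ Γ₂, ∀ p : Γ₁,
      wt (p : List (ℤ × ℤ) × List (ℤ × ℤ)).1 * wt (p : List (ℤ × ℤ) × List (ℤ × ℤ)).2
        = wt ((e p : List (ℤ × ℤ) × List (ℤ × ℤ))).1
            * wt ((e p : List (ℤ × ℤ) × List (ℤ × ℤ))).2 := by
  obtain ⟨-, -, -, -, hpw, -⟩ := hccw
  simp only [List.pairwise_cons, List.mem_cons, List.not_mem_nil] at hpw
  have h12 : x₁ ≠ x₂ := hpw.1 x₂ (by tauto)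
  have h1y2 : x₁ ≠ y₂ := hpw.1 y₂ (by tauto)
  have h1y1 : x₁ ≠ y₁ := hpw.1 y₁ (by tauto)
  have h2y2 : x₂ ≠ y₂ := hpw.2.1 y₂ (by tauto)
  have h2y1 : x₂ ≠ y₁ := hpw.2.1 y₁ (by tauto)
  have hy21 : y₂ ≠ y₁ := hpw.2.2.1 y₁ (by tauto)
  have m1 : ∀ pp : List (ℤ × ℤ) × List (ℤ × ℤ), pp ∈ Γ₁ →
      (IsExcursion A x₁ y₂ (swapPair pp).1 ∧ IsExcursion A x₂ y₁ (swapPair pp).2) ∧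
      swapPair (swapPair pp) = pp ∧
      (swapPair pp).1.length + (swapPair pp).2.length = pp.1.length + pp.2.length ∧
      3 ≤ pp.1.length ∧ 3 ≤ pp.2.length := by
    rintro ⟨w1, w2⟩ hp
    rw [hΓ₁] at hp
    obtain ⟨he1, he2, hcr⟩ := hp
    have := master he1 he2 h12.symm h2y1 h1y2.symm hy21 hcr
    exact ⟨⟨this.1, this.2.1⟩, this.2.2.2.1, this.2.2.2.2, he1.1, he2.1⟩
  have m2 : ∀ pp : List (ℤ × ℤ) × List (ℤ × ℤ), pp ∈ Γ₂ →
      (IsExcursion A x₁ y₁ (swapPair pp).1 ∧ IsExcursion A x₂ y₂ (swapPair pp).2 ∧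
       ∃ v ∈ loopErase (swapPair pp).1, v ∈ (swapPair pp).2) ∧
      swapPair (swapPair pp) = pp := by
    rintro ⟨w1, w2⟩ hp
    have hcr := hcross _ hp
    rw [hΓ₂] at hp
    obtain ⟨he1, he2⟩ := hp
    have := master he1 he2 h12.symm h2y2 h1y1.symm hy21.symm hcr
    exact ⟨⟨this.1, this.2.1, this.2.2.1⟩, this.2.2.2.1⟩
  refine ⟨⟨fun p => ⟨swapPair p.1, by rw [hΓ₂]; exact ⟨(m1 p.1 p.2).1.1, (m1 p.1 p.2).1.2⟩⟩,
    fun q => ⟨swapPair q.1, by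
      rw [hΓ₁]
      exact ⟨(m2 q.1 q.2).1.1, (m2 q.1 q.2).1.2.1, (m2 q.1 q.2).1.2.2⟩⟩,
    fun p => Subtype.ext ((m1 p.1 p.2).2.1),
    fun q => Subtype.ext ((m2 q.1 q.2).2)⟩, ?_⟩
  intro p
  have hlen := (m1 p.1 p.2).2.2.1
  have hl1 := (m1 p.1 p.2).2.2.2.1
  have hl2 := (m1 p.1 p.2).2.2.2.2
  have hl3 : 3 ≤ (swapPair p.1).1.length := (m1 p.1 p.2).1.1.1
  have hl4 : 3 ≤ (swapPair p.1).2.length := (m1 p.1 p.2).1.2.1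
  show wt p.1.1 * wt p.1.2 = wt (swapPair p.1).1 * wt (swapPair p.1).2
  rw [wt, wt, wt, wt, ← pow_add, ← pow_add]
  congr 1
  omega
end
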